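/- arXiv:2502.16039 — 7 statements merged into one kernel-verified Lean document; each statement's English description precedes it below -/
import Mathlib

section
/- Let n ≥ 2 be an integer, p > 0 and 0 < q < (p+2n)/p, and define f(α,β) := (1+α²)^{(pq−p−2n)/2} β^{−q} for α ≥ 0, β > 0. Then f satisfies Condition (F): for every x ≠ 0 in ℝⁿ, every λ with 0 < λ < |x|, every z with |z−x| > λ, and all reals 0 < a ≤ b, one has f(|z|, a) > (λ/|z−x|)^{p+2n} · f(|z^{x,λ}|, (λ/|z−x|)^p b). -/
noncomputable section

/-- Inversion of `ξ` about the sphere of radius `l` centered at `x`. -/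
def inversion {n : ℕ} (x : EuclideanSpace ℝ (Fin n)) (l : ℝ)
    (ξ : EuclideanSpace ℝ (Fin n)) : EuclideanSpace ℝ (Fin n) :=
  x + (l ^ 2 / ‖ξ - x‖ ^ 2) • (ξ - x)

/-!
Write `t = λ/|z - x|`, `E = (pq - p - 2n)/2 < 0` and `w = z^{x,λ}`. After substituting `f`, the
right-hand side is `((1 + |w|²)/t²)^E b^{-q}` and the left-hand side is `(1 + |z|²)^E a^{-q}`.
Since `E < 0` and `b^{-q} ≤ a^{-q}`, it suffices that `t²(1 + |z|²) < 1 + |w|²`, which follows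
from the identity
`|z - x|²(1 + |w|²) - λ²(1 + |z|²) = (|z - x|² - λ²)(1 + |x|² - λ²)`.
-/

open RealInnerProductSpace

theorem sq_norm_sub_mul_one_add_sq_norm_inversion_sub {n : ℕ} (x z : EuclideanSpace ℝ (Fin n))
    (l : ℝ) (hzx : z ≠ x) :
    ‖z - x‖ ^ 2 * (1 + ‖inversion x l z‖ ^ 2) - l ^ 2 * (1 + ‖z‖ ^ 2) =
      (‖z - x‖ ^ 2 - l ^ 2) * (1 + ‖x‖ ^ 2 - l ^ 2) := by
  have hr : ‖z - x‖ ≠ 0 := norm_ne_zero_iff.mpr (sub_ne_zero.mpr hzx)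
  have hz : ‖z‖ ^ 2 = ‖x‖ ^ 2 + 2 * ⟪x, z - x⟫ + ‖z - x‖ ^ 2 := by
    simpa using norm_add_sq_real x (z - x)
  have hw : ‖inversion x l z‖ ^ 2 = ‖x‖ ^ 2 + 2 * (l ^ 2 / ‖z - x‖ ^ 2 * ⟪x, z - x⟫) +
      (l ^ 2 / ‖z - x‖ ^ 2) ^ 2 * ‖z - x‖ ^ 2 := by
    rw [inversion, norm_add_sq_real, real_inner_smul_right, norm_smul,
      Real.norm_of_nonneg (by positivity)]
    ring
  rw [hz, hw]
  field_simp
  ring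

theorem sq_div_mul_one_add_sq_norm_lt_inversion {n : ℕ} {x z : EuclideanSpace ℝ (Fin n)} {l : ℝ}
    (hzx : l ^ 2 < ‖z - x‖ ^ 2) (hx : l ^ 2 < 1 + ‖x‖ ^ 2) :
    (l / ‖z - x‖) ^ 2 * (1 + ‖z‖ ^ 2) < 1 + ‖inversion x l z‖ ^ 2 := by
  have hr : 0 < ‖z - x‖ ^ 2 := (sq_nonneg l).trans_lt hzx
  have hne : z ≠ x := fun h => by simp [h] at hr
  rw [div_pow, div_mul_eq_mul_div, div_lt_iff₀ hr]
  linarith [sq_norm_sub_mul_one_add_sq_norm_inversion_sub x z l hne,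
    mul_pos (sub_pos.mpr hzx) (sub_pos.mpr hx)]

theorem rpow_mul_one_add_sq_rpow_mul_rpow_neg_lt {p q s t α α' a b : ℝ} (hs : p * q < p + s) (hq : 0 ≤ q)
    (ht : 0 < t) (hα : t ^ 2 * (1 + α ^ 2) < 1 + α' ^ 2) (ha : 0 < a) (hab : a ≤ b) :
    t ^ (p + s) * ((1 + α' ^ 2) ^ ((p * q - p - s) / 2) * (t ^ p * b) ^ (-q)) <
      (1 + α ^ 2) ^ ((p * q - p - s) / 2) * a ^ (-q) := by
  set E := (p * q - p - s) / 2
  have hE : E < 0 := by simp only [E]; linarith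
  have hb : 0 < b := ha.trans_le hab
  have hA : 0 < 1 + α ^ 2 := by positivity
  have hsplit : t ^ (p + s) * ((1 + α' ^ 2) ^ E * (t ^ p * b) ^ (-q)) =
      ((1 + α' ^ 2) / t ^ 2) ^ E * b ^ (-q) := by
    have htE : t ^ (p + s + p * -q) = ((t ^ 2)⁻¹) ^ E := by
      rw [← Real.rpow_natCast, ← Real.rpow_neg ht.le, ← Real.rpow_mul ht.le]
      congr 1
      simp only [E]
      ring
    rw [Real.mul_rpow (by positivity) hb.le, ← Real.rpow_mul ht.le, div_eq_mul_inv,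
      Real.mul_rpow (by positivity) (by positivity), ← htE,
      Real.rpow_add ht (p + s)]
    ring
  rw [hsplit]
  have hbase : ((1 + α' ^ 2) / t ^ 2) ^ E < (1 + α ^ 2) ^ E :=
    Real.rpow_lt_rpow_of_neg hA (by rwa [lt_div_iff₀ (by positivity), mul_comm]) hE
  have hpow : b ^ (-q) ≤ a ^ (-q) := Real.rpow_le_rpow_of_nonpos ha hab (neg_nonpos.mpr hq)
  exact mul_lt_mul_of_lt_of_le_of_nonneg_of_pos hbase hpow (by positivity) (by positivity)

theorem stmt_2_general {n : ℕ} (p q : ℝ) (hp : 0 < p) (hq : 0 < q)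
    (hq' : q < (p + 2 * (n : ℝ)) / p)
    (f : ℝ → ℝ → ℝ)
    (hf : ∀ α : ℝ, 0 ≤ α → ∀ β : ℝ, 0 < β →
      f α β = (1 + α ^ 2) ^ ((p * q - p - 2 * (n : ℝ)) / 2) * β ^ (-q)) :
    ∀ x : EuclideanSpace ℝ (Fin n), x ≠ 0 → ∀ l : ℝ, 0 < l → l < ‖x‖ →
      ∀ z : EuclideanSpace ℝ (Fin n), l < ‖z - x‖ → ∀ a b : ℝ, 0 < a → a ≤ b →
      f ‖z‖ a >
        (l / ‖z - x‖) ^ (p + 2 * (n : ℝ)) *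
          f ‖inversion x l z‖ ((l / ‖z - x‖) ^ p * b) := by
  intro x _ l hl hlx z hz a b ha hab
  have hpq : p * q < p + 2 * (n : ℝ) := by rwa [lt_div_iff₀ hp, mul_comm] at hq'
  have ht : 0 < l / ‖z - x‖ := div_pos hl (hl.trans hz)
  have hinv := sq_div_mul_one_add_sq_norm_lt_inversion (pow_lt_pow_left₀ hz hl.le two_ne_zero)
    (by nlinarith : l ^ 2 < 1 + ‖x‖ ^ 2)
  rw [hf _ (norm_nonneg z) a ha, hf _ (norm_nonneg _) _ (by have := ha.trans_le hab; positivity)]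
  exact rpow_mul_one_add_sq_rpow_mul_rpow_neg_lt hpq hq.le ht hinv ha hab

theorem stmt_2 {n : ℕ} (hn : 2 ≤ n) (p q : ℝ) (hp : 0 < p) (hq : 0 < q)
    (hq' : q < (p + 2 * (n : ℝ)) / p)
    (f : ℝ → ℝ → ℝ)
    (hf : ∀ α : ℝ, 0 ≤ α → ∀ β : ℝ, 0 < β →
      f α β = (1 + α ^ 2) ^ ((p * q - p - 2 * (n : ℝ)) / 2) * β ^ (-q)) :
    ∀ x : EuclideanSpace ℝ (Fin n), x ≠ 0 → ∀ l : ℝ, 0 < l → l < ‖x‖ →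
      ∀ z : EuclideanSpace ℝ (Fin n), l < ‖z - x‖ → ∀ a b : ℝ, 0 < a → a ≤ b →
      f ‖z‖ a >
        (l / ‖z - x‖) ^ (p + 2 * (n : ℝ)) *
          f ‖inversion x l z‖ ((l / ‖z - x‖) ^ p * b) :=
  stmt_2_general p q hp hq hq' f hf
end
end

section
/- Let n ≥ 2 be an integer and p > 0. Let f : [0,∞) × (0,∞) → (0,∞) be continuous and let u be a positive C¹ solution of the integral equation (IE). Then for every fixed x ∈ ℝⁿ ∖ {0} there exists λ₀ ∈ (0, |x|) such that for every λ ∈ (0, λ₀) and every y ∈ ℝⁿ ∖ {0} with |y−x| ≥ λ, one has u_{x,λ}(y) ≥ u(y). -/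
/-!
Along the ray from `x` through `y`, with `s = λ² / |y - x|²`, the Kelvin transform is
`u_{x,λ}(y) = s^(-p/2) u(x + s (y - x))`, and `u(y)` is the same expression at `s = 1`.

Near `x` the function `t ↦ t^(-p/2) u(x + t v)` is decreasing on `(0, 1]` once `|v|` is small:
its derivative has the sign of `t Du(x + t v) v - (p/2) u(x + t v)`, and on a closed ball around
`x` the function `u` is bounded below by some `m > 0` while `|Du|` is bounded.

Far from `x` the integral equation gives the growth bound `u(y) ≤ C |y - x|^p`: the weight
`f(|·|, u)` is integrable because the kernel is integrable against it both at `x` and at `-x`.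
On the other hand `u_{x,λ}(y) ≥ (|y - x| / λ)^p m`, since the inverted point lies in the ball,
so `λ^p C ≤ m` suffices.
-/

open MeasureTheory

noncomputable section

/-- Kelvin-type transform of `u` about the sphere of radius `l` centered at `x`. -/
def kelvin {n : ℕ} (p : ℝ) (u : EuclideanSpace ℝ (Fin n) → ℝ)
    (x : EuclideanSpace ℝ (Fin n)) (l : ℝ) (ξ : EuclideanSpace ℝ (Fin n)) : ℝ :=
  (‖ξ - x‖ / l) ^ p * u (inversion x l ξ)

open Set Metric

theorem Real.add_rpow_le_two_rpow_mul {a b p : ℝ} (ha : 0 ≤ a) (hb : 0 ≤ b) (hp : 0 ≤ p) :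
    (a + b) ^ p ≤ 2 ^ p * (a ^ p + b ^ p) := by
  wlog hab : a ≤ b generalizing a b
  · rw [add_comm a, add_comm (a ^ p)]
    exact this hb ha (le_of_not_ge hab)
  calc (a + b) ^ p ≤ (2 * b) ^ p := by gcongr; linarith
    _ = 2 ^ p * b ^ p := Real.mul_rpow zero_le_two hb
    _ ≤ 2 ^ p * (a ^ p + b ^ p) := by
      gcongr
      exact le_add_of_nonneg_left (Real.rpow_nonneg ha p)

section PowerKernel

variable {E : Type*} [NormedAddCommGroup E] {p : ℝ}

theorem norm_sub_rpow_le (a b c : E) (hp : 0 ≤ p) :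
    ‖a - c‖ ^ p ≤ 2 ^ p * (‖a - b‖ ^ p + ‖b - c‖ ^ p) :=
  (Real.rpow_le_rpow (norm_nonneg _) (norm_sub_le_norm_sub_add_norm_sub a b c) hp).trans
    (Real.add_rpow_le_two_rpow_mul (norm_nonneg _) (norm_nonneg _) hp)

variable [MeasurableSpace E] {μ : Measure E} {g : E → ℝ}

theorem integrable_of_integrable_norm_sub_rpow_mul (hp : 0 ≤ p) (hg : AEStronglyMeasurable g μ)
    (hg₀ : 0 ≤ᵐ[μ] g) {a b : E} (hab : a ≠ b)
    (ha : Integrable (fun z ↦ ‖a - z‖ ^ p * g z) μ)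
    (hb : Integrable (fun z ↦ ‖b - z‖ ^ p * g z) μ) : Integrable g μ := by
  have hd : 0 < ‖a - b‖ ^ p := Real.rpow_pos_of_pos (norm_pos_iff.2 (sub_ne_zero.2 hab)) p
  refine ((ha.add hb).const_mul (2 ^ p / ‖a - b‖ ^ p)).mono' hg ?_
  filter_upwards [hg₀] with z hz
  rw [Real.norm_of_nonneg hz, div_mul_eq_mul_div, le_div_iff₀' hd]
  calc ‖a - b‖ ^ p * g z ≤ 2 ^ p * (‖a - z‖ ^ p + ‖z - b‖ ^ p) * g z := by
        gcongr
        exact norm_sub_rpow_le a z b hp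
    _ = 2 ^ p * (‖a - z‖ ^ p * g z + ‖b - z‖ ^ p * g z) := by rw [norm_sub_rev z b]; ring

theorem integral_norm_sub_rpow_mul_le (hp : 0 ≤ p) (hg₀ : 0 ≤ᵐ[μ] g) (hg : Integrable g μ)
    {x : E} (hx : Integrable (fun z ↦ ‖x - z‖ ^ p * g z) μ) (y : E) :
    ∫ z, ‖y - z‖ ^ p * g z ∂μ ≤
      2 ^ p * (‖y - x‖ ^ p * ∫ z, g z ∂μ + ∫ z, ‖x - z‖ ^ p * g z ∂μ) := by
  calc ∫ z, ‖y - z‖ ^ p * g z ∂μ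
      ≤ ∫ z, 2 ^ p * (‖y - x‖ ^ p * g z + ‖x - z‖ ^ p * g z) ∂μ := by
        refine integral_mono_of_nonneg ?_ (((hg.const_mul _).add hx).const_mul _) ?_
        · filter_upwards [hg₀] with z hz
          exact mul_nonneg (Real.rpow_nonneg (norm_nonneg _) _) hz
        · filter_upwards [hg₀] with z hz
          calc ‖y - z‖ ^ p * g z ≤ 2 ^ p * (‖y - x‖ ^ p + ‖x - z‖ ^ p) * g z := by
                gcongr
                exact norm_sub_rpow_le y x z hp
            _ = 2 ^ p * (‖y - x‖ ^ p * g z + ‖x - z‖ ^ p * g z) := by ring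
    _ = 2 ^ p * (‖y - x‖ ^ p * ∫ z, g z ∂μ + ∫ z, ‖x - z‖ ^ p * g z ∂μ) := by
        rw [integral_const_mul, integral_add (hg.const_mul _) hx, integral_const_mul]

theorem integral_norm_sub_rpow_mul_le_mul_rpow (hp : 0 ≤ p) (hg₀ : 0 ≤ᵐ[μ] g)
    (hg : Integrable g μ) {x : E} (hx : Integrable (fun z ↦ ‖x - z‖ ^ p * g z) μ) {r₀ : ℝ}
    (hr₀ : 0 < r₀) {y : E} (hy : r₀ ≤ ‖y - x‖) :
    ∫ z, ‖y - z‖ ^ p * g z ∂μ ≤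
      2 ^ p * (∫ z, g z ∂μ + (∫ z, ‖x - z‖ ^ p * g z ∂μ) / r₀ ^ p) * ‖y - x‖ ^ p := by
  have hr₀p : 0 < r₀ ^ p := Real.rpow_pos_of_pos hr₀ p
  have hI : 0 ≤ ∫ z, ‖x - z‖ ^ p * g z ∂μ :=
    integral_nonneg_of_ae <| by
      filter_upwards [hg₀] with z hz
      exact mul_nonneg (Real.rpow_nonneg (norm_nonneg _) _) hz
  have hle : 1 ≤ ‖y - x‖ ^ p / r₀ ^ p :=
    (one_le_div hr₀p).2 (Real.rpow_le_rpow hr₀.le hy hp)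
  refine (integral_norm_sub_rpow_mul_le hp hg₀ hg hx y).trans ?_
  rw [mul_assoc, add_mul, div_mul_eq_mul_div, mul_div_assoc, mul_comm (∫ z, g z ∂μ)]
  gcongr
  exact le_mul_of_one_le_right hI hle

theorem aestronglyMeasurable_of_continuousOn_compl_singleton [OpensMeasurableSpace E]
    [NullSingletonClass μ] {a : E} (hg : ContinuousOn g {a}ᶜ) : AEStronglyMeasurable g μ := by
  simpa using hg.aestronglyMeasurable (μ := μ) (measurableSet_singleton a).compl

theorem exists_le_mul_norm_sub_rpow_of_eq_integral [NormedSpace ℝ E] [OpensMeasurableSpace E]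
    [NullSingletonClass μ] (hp : 0 ≤ p) (hg : ContinuousOn g {0}ᶜ) (hg₀ : ∀ z ≠ 0, 0 ≤ g z)
    {u : E → ℝ} (hu : ∀ y ≠ 0, 0 < u y) (hIE : ∀ y ≠ 0, u y = ∫ z, ‖y - z‖ ^ p * g z ∂μ)
    {x : E} (hx : x ≠ 0) {r₀ : ℝ} (hr₀ : 0 < r₀) :
    ∃ C > 0, ∀ y ≠ 0, r₀ ≤ ‖y - x‖ → u y ≤ C * ‖y - x‖ ^ p := by
  have hg₀' : 0 ≤ᵐ[μ] g := by
    filter_upwards [Measure.ae_ne μ 0] with z hz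
    exact hg₀ z hz
  have hIE_int : ∀ y ≠ 0, Integrable (fun z ↦ ‖y - z‖ ^ p * g z) μ :=
    fun y hy ↦ Integrable.of_integral_ne_zero (hIE y hy ▸ (hu y hy).ne')
  have hg_int : Integrable g μ :=
    integrable_of_integrable_norm_sub_rpow_mul hp
      (aestronglyMeasurable_of_continuousOn_compl_singleton hg) hg₀'
      (fun h ↦ hx <| by simpa [← two_smul ℝ] using congrArg (· + x) h)
      (hIE_int x hx) (hIE_int (-x) (neg_ne_zero.2 hx))
  refine ⟨2 ^ p * (∫ z, g z ∂μ + u x / r₀ ^ p), ?_, fun y hy hy₀ ↦ ?_⟩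
  · have := integral_nonneg_of_ae hg₀'
    have := hu x hx
    positivity
  · rw [hIE y hy, hIE x hx]
    exact integral_norm_sub_rpow_mul_le_mul_rpow hp hg₀' hg_int (hIE_int x hx) hr₀ hy₀

end PowerKernel

section Ray

variable {E : Type*} [NormedAddCommGroup E] [NormedSpace ℝ E] {u : E → ℝ}

theorem antitoneOn_rpow_neg_mul_along_ray {x v : E} {q : ℝ}
    (hu : ∀ t ∈ Ioc (0 : ℝ) 1, DifferentiableAt ℝ u (x + t • v))
    (hq : ∀ t ∈ Ioc (0 : ℝ) 1, t * fderiv ℝ u (x + t • v) v ≤ q * u (x + t • v)) :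
    AntitoneOn (fun t : ℝ ↦ t ^ (-q) * u (x + t • v)) (Ioc 0 1) := by
  have hderiv : ∀ t ∈ Ioc (0 : ℝ) 1, HasDerivAt (fun t : ℝ ↦ t ^ (-q) * u (x + t • v))
      (t ^ (-q - 1) * (t * fderiv ℝ u (x + t • v) v - q * u (x + t • v))) t := by
    intro t ht
    have hray : HasDerivAt (fun t : ℝ ↦ x + t • v) v t := by
      simpa using ((hasDerivAt_id t).smul_const v).const_add x
    have h := (Real.hasDerivAt_rpow_const (p := -q) (Or.inl ht.1.ne')).mul
      ((hu t ht).hasFDerivAt.comp_hasDerivAt t hray)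
    refine h.congr_deriv ?_
    rw [show t ^ (-q) = t ^ (-q - 1) * t by rw [← Real.rpow_add_one ht.1.ne']; ring_nf]
    simp only [Function.comp_apply]
    ring
  refine antitoneOn_of_deriv_nonpos (convex_Ioc 0 1)
    (fun t ht ↦ (hderiv t ht).continuousAt.continuousWithinAt)
    (fun t ht ↦ (hderiv t (interior_subset ht)).differentiableAt.differentiableWithinAt)
    fun t ht ↦ ?_
  have ht' : t ∈ Ioc (0 : ℝ) 1 := interior_subset ht
  rw [(hderiv t ht').deriv]
  exact mul_nonpos_of_nonneg_of_nonpos (Real.rpow_nonneg ht'.1.le _) (sub_nonpos.2 (hq t ht'))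

theorem IsCompact.exists_pos_le_and_norm_fderiv_le {K U : Set E} (hK : IsCompact K)
    (hU : IsOpen U) (hKU : K ⊆ U) (hu : ContDiffOn ℝ 1 u U) (hpos : ∀ z ∈ U, 0 < u z) :
    ∃ m > 0, ∃ M ≥ 0, ∀ z ∈ K, m ≤ u z ∧ ‖fderiv ℝ u z‖ ≤ M := by
  obtain ⟨m, hm, hmK⟩ := hK.exists_forall_le' (hu.continuousOn.mono hKU) fun z hz ↦ hpos z (hKU hz)
  obtain ⟨M, hMK⟩ := hK.exists_bound_of_continuousOn
    ((hu.continuousOn_fderiv_of_isOpen hU le_rfl).mono hKU)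
  exact ⟨m, hm, max M 0, le_max_right _ _, fun z hz ↦ ⟨hmK z hz, (hMK z hz).trans (le_max_left _ _)⟩⟩

theorem exists_radius_antitoneOn_rpow_neg_mul_along_ray [ProperSpace E] {U : Set E}
    (hU : IsOpen U) (hu : ContDiffOn ℝ 1 u U) (hpos : ∀ z ∈ U, 0 < u z) {x : E} {ρ : ℝ}
    (hρ : 0 < ρ) (hρU : closedBall x ρ ⊆ U) {q : ℝ} (hq : 0 < q) :
    ∃ r₀ ∈ Ioc 0 ρ, ∃ m > 0, (∀ z ∈ closedBall x ρ, m ≤ u z) ∧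
      ∀ v : E, ‖v‖ ≤ r₀ → AntitoneOn (fun t : ℝ ↦ t ^ (-q) * u (x + t • v)) (Ioc 0 1) := by
  obtain ⟨m, hm, M, hM, hmM⟩ :=
    (isCompact_closedBall x ρ).exists_pos_le_and_norm_fderiv_le hU hρU hu hpos
  refine ⟨min ρ (q * m / (M + 1)), ⟨lt_min hρ (by positivity), min_le_left _ _⟩, m, hm,
    fun z hz ↦ (hmM z hz).1, fun v hv ↦ ?_⟩
  have hmem : ∀ t ∈ Ioc (0 : ℝ) 1, x + t • v ∈ closedBall x ρ := fun t ht ↦ by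
    rw [mem_closedBall, dist_eq_norm, add_sub_cancel_left, norm_smul, Real.norm_of_nonneg ht.1.le]
    exact (mul_le_of_le_one_left (norm_nonneg v) ht.2).trans (hv.trans (min_le_left _ _))
  refine antitoneOn_rpow_neg_mul_along_ray
    (fun t ht ↦ (hu.contDiffAt (hU.mem_nhds (hρU (hmem t ht)))).differentiableAt one_ne_zero)
    fun t ht ↦ ?_
  obtain ⟨hmu, hMu⟩ := hmM _ (hmem t ht)
  have hv' : ‖v‖ ≤ q * m / (M + 1) := hv.trans (min_le_right _ _)
  calc t * fderiv ℝ u (x + t • v) v ≤ t * ‖fderiv ℝ u (x + t • v) v‖ :=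
        mul_le_mul_of_nonneg_left (le_abs_self _) ht.1.le
    _ ≤ ‖fderiv ℝ u (x + t • v) v‖ := mul_le_of_le_one_left (norm_nonneg _) ht.2
    _ ≤ M * (q * m / (M + 1)) :=
        (ContinuousLinearMap.le_opNorm _ _).trans (mul_le_mul hMu hv' (norm_nonneg v) hM)
    _ ≤ q * m := by
        rw [mul_div_assoc', div_le_iff₀ (by positivity)]
        nlinarith [mul_pos hq hm]
    _ ≤ q * u (x + t • v) := by gcongr

end Ray

section Kelvin

variable {n : ℕ} {p l : ℝ} {u : EuclideanSpace ℝ (Fin n) → ℝ} {x y : EuclideanSpace ℝ (Fin n)}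

theorem inversion_eq_euclideanGeometry_inversion (x : EuclideanSpace ℝ (Fin n)) (l : ℝ)
    (ξ : EuclideanSpace ℝ (Fin n)) : inversion x l ξ = EuclideanGeometry.inversion x l ξ := by
  rw [inversion, EuclideanGeometry.inversion, dist_eq_norm, div_pow, vsub_eq_sub, vadd_eq_add,
    add_comm]

theorem norm_inversion_sub (x : EuclideanSpace ℝ (Fin n)) (l : ℝ) (ξ : EuclideanSpace ℝ (Fin n)) :
    ‖inversion x l ξ - x‖ = l ^ 2 / ‖ξ - x‖ := by
  rw [← dist_eq_norm, ← dist_eq_norm, inversion_eq_euclideanGeometry_inversion,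
    EuclideanGeometry.dist_inversion_center]

theorem kelvin_eq_rpow_neg_mul (hl : 0 < l) (hy : y ≠ x) :
    kelvin p u x l y =
      (l ^ 2 / ‖y - x‖ ^ 2) ^ (-(p / 2)) * u (x + (l ^ 2 / ‖y - x‖ ^ 2) • (y - x)) := by
  have hr : 0 < ‖y - x‖ := norm_pos_iff.2 (sub_ne_zero.2 hy)
  have hscale : (l ^ 2 / ‖y - x‖ ^ 2) ^ (-(p / 2)) = (‖y - x‖ / l) ^ p := by
    rw [Real.rpow_neg (by positivity), ← Real.inv_rpow (by positivity), inv_div, ← div_pow,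
      ← Real.rpow_natCast_mul (by positivity)]
    congr 1
    push_cast
    ring
  rw [hscale]
  rfl

theorem le_kelvin_of_antitoneOn (hl : 0 < l) (hly : l ≤ ‖y - x‖)
    (hanti : AntitoneOn (fun t : ℝ ↦ t ^ (-(p / 2)) * u (x + t • (y - x))) (Ioc 0 1)) :
    u y ≤ kelvin p u x l y := by
  have hr : 0 < ‖y - x‖ := hl.trans_le hly
  have hs : l ^ 2 / ‖y - x‖ ^ 2 ∈ Ioc (0 : ℝ) 1 :=
    ⟨by positivity, div_le_one_of_le₀ (pow_le_pow_left₀ hl.le hly 2) (by positivity)⟩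
  rw [kelvin_eq_rpow_neg_mul hl (sub_ne_zero.1 (norm_pos_iff.1 hr))]
  simpa using hanti hs (right_mem_Ioc.2 one_pos) hs.2

theorem le_kelvin_of_le_mul_rpow {m C : ℝ} (hl : 0 < l) (hly : l ≤ ‖y - x‖)
    (hm : m ≤ u (inversion x l y)) (hy : u y ≤ C * ‖y - x‖ ^ p) (hlC : l ^ p * C ≤ m) :
    u y ≤ kelvin p u x l y := by
  have hr : 0 < ‖y - x‖ := hl.trans_le hly
  calc u y ≤ C * ‖y - x‖ ^ p := hy
    _ = (‖y - x‖ / l) ^ p * (l ^ p * C) := by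
        rw [Real.div_rpow hr.le hl.le, div_mul_eq_mul_div, mul_comm (l ^ p), ← mul_assoc,
          mul_div_assoc, div_self (Real.rpow_pos_of_pos hl p).ne']
        ring
    _ ≤ kelvin p u x l y := by
        rw [kelvin]
        gcongr
        exact hlC.trans hm

end Kelvin

theorem stmt_3_general {n : ℕ} (p : ℝ) (hp : 0 < p)
    (f : ℝ → ℝ → ℝ)
    (hf_cont : ContinuousOn (fun q : ℝ × ℝ => f q.1 q.2) (Set.Ici 0 ×ˢ Set.Ioi 0))
    (hf_pos : ∀ α : ℝ, 0 ≤ α → ∀ β : ℝ, 0 < β → 0 < f α β)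
    (u : EuclideanSpace ℝ (Fin n) → ℝ)
    (hu_pos : ∀ x : EuclideanSpace ℝ (Fin n), x ≠ 0 → 0 < u x)
    (hu_C1 : ContDiffOn ℝ 1 u {(0 : EuclideanSpace ℝ (Fin n))}ᶜ)
    (hIE : ∀ x : EuclideanSpace ℝ (Fin n), x ≠ 0 →
      u x = ∫ y : EuclideanSpace ℝ (Fin n), ‖x - y‖ ^ p * f ‖y‖ (u y))
    (x : EuclideanSpace ℝ (Fin n)) (hx : x ≠ 0) :
    ∃ lam₀ : ℝ, lam₀ ∈ Set.Ioo 0 ‖x‖ ∧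
      ∀ lam : ℝ, lam ∈ Set.Ioo 0 lam₀ →
        ∀ y : EuclideanSpace ℝ (Fin n), y ≠ 0 → lam ≤ ‖y - x‖ →
          kelvin p u x lam y ≥ u y := by
  -- for `n = 0` the volume is a Dirac mass and `{0}` is not null
  have : Nontrivial (EuclideanSpace ℝ (Fin n)) := ⟨x, 0, hx⟩
  have hx₀ : 0 < ‖x‖ := norm_pos_iff.2 hx
  have hball : closedBall x (‖x‖ / 2) ⊆ {0}ᶜ := by
    rintro z hz rfl
    rw [mem_closedBall, dist_zero_left] at hz
    linarith
  obtain ⟨r₀, ⟨hr₀, hr₀x⟩, m, hm, hm_le, hanti⟩ :=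
    exists_radius_antitoneOn_rpow_neg_mul_along_ray isOpen_compl_singleton hu_C1 hu_pos
      (half_pos hx₀) hball (half_pos hp)
  obtain ⟨C, hC, hgrowth⟩ := exists_le_mul_norm_sub_rpow_of_eq_integral hp.le
    (hf_cont.comp (continuous_norm.continuousOn.prodMk hu_C1.continuousOn)
      fun z hz ↦ ⟨norm_nonneg z, hu_pos z hz⟩)
    (fun z hz ↦ (hf_pos _ (norm_nonneg z) _ (hu_pos z hz)).le) hu_pos hIE hx hr₀
  have hlam₀ : min r₀ ((m / C) ^ p⁻¹) ≤ r₀ := min_le_left _ _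
  refine ⟨min r₀ ((m / C) ^ p⁻¹), ⟨lt_min hr₀ (by positivity), by linarith⟩, ?_⟩
  rintro l ⟨hl, hl_lt⟩ y hy hly
  rcases le_total ‖y - x‖ r₀ with hnear | hfar
  · exact le_kelvin_of_antitoneOn hl hly (hanti _ hnear)
  · refine le_kelvin_of_le_mul_rpow hl hly (hm_le _ ?_) (hgrowth y hy hfar) ?_
    · rw [mem_closedBall, dist_eq_norm, norm_inversion_sub, div_le_iff₀ (hl.trans_le hly)]
      nlinarith
    · rw [← le_div_iff₀ hC, ← Real.rpow_inv_rpow (div_pos hm hC).le hp.ne']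
      gcongr
      exact hl_lt.le.trans (min_le_right _ _)

theorem stmt_3 {n : ℕ} (hn : 2 ≤ n) (p : ℝ) (hp : 0 < p)
    (f : ℝ → ℝ → ℝ)
    (hf_cont : ContinuousOn (fun q : ℝ × ℝ => f q.1 q.2) (Set.Ici 0 ×ˢ Set.Ioi 0))
    (hf_pos : ∀ α : ℝ, 0 ≤ α → ∀ β : ℝ, 0 < β → 0 < f α β)
    (u : EuclideanSpace ℝ (Fin n) → ℝ)
    (hu_pos : ∀ x : EuclideanSpace ℝ (Fin n), x ≠ 0 → 0 < u x)
    (hu_C1 : ContDiffOn ℝ 1 u {(0 : EuclideanSpace ℝ (Fin n))}ᶜ)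
    (hIE : ∀ x : EuclideanSpace ℝ (Fin n), x ≠ 0 →
      u x = ∫ y : EuclideanSpace ℝ (Fin n), ‖x - y‖ ^ p * f ‖y‖ (u y))
    (x : EuclideanSpace ℝ (Fin n)) (hx : x ≠ 0) :
    ∃ lam₀ : ℝ, lam₀ ∈ Set.Ioo 0 ‖x‖ ∧
      ∀ lam : ℝ, lam ∈ Set.Ioo 0 lam₀ →
        ∀ y : EuclideanSpace ℝ (Fin n), y ≠ 0 → lam ≤ ‖y - x‖ →
          kelvin p u x lam y ≥ u y :=
  stmt_3_general p hp f hf_cont hf_pos u hu_pos hu_C1 hIE x hx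
end
end

section
/- Let n ≥ 2 be an integer and p > 0. For every x ∈ ℝⁿ, every λ > 0, and all ξ, z ∈ ℝⁿ with |ξ−x| > λ and |z−x| > λ, the kernel K is strictly positive: K(x,λ;ξ,z) = (|z−x|/λ)^p |ξ − z^{x,λ}|^p − |ξ−z|^p > 0. -/
/-!
Writing `a = ξ - x`, `b = z - x` and `c = λ² / |b|²`, expanding the squared norms gives the
identity `(|b|/λ)² |a - c b|² = |a - b|² + (|a|² - λ²)(|b|² - λ²)/λ²`, whose last term is
positive when both points lie outside the sphere. Since
`(|b|/λ)^p |a - c b|^p = ((|b|/λ) |a - c b|)^p`, the strict inequality survives raising to the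
power `p > 0`.
-/

noncomputable section

/-- The kernel `K(x, l; ξ, z)` in the moving-spheres computation. -/
def kernelK {n : ℕ} (p : ℝ) (x : EuclideanSpace ℝ (Fin n)) (l : ℝ)
    (ξ z : EuclideanSpace ℝ (Fin n)) : ℝ :=
  (‖z - x‖ / l) ^ p * ‖ξ - inversion x l z‖ ^ p - ‖ξ - z‖ ^ p

section InnerProductSpace

variable {E : Type*} [NormedAddCommGroup E] [InnerProductSpace ℝ E]

theorem sq_div_mul_norm_sub_smul (a b : E) {l : ℝ} (hl : l ≠ 0) (hb : b ≠ 0) :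
    (‖b‖ / l * ‖a - (l ^ 2 / ‖b‖ ^ 2) • b‖) ^ 2
      = ‖a - b‖ ^ 2 + (‖a‖ ^ 2 - l ^ 2) * (‖b‖ ^ 2 - l ^ 2) / l ^ 2 := by
  have hb' : ‖b‖ ≠ 0 := norm_ne_zero_iff.mpr hb
  rw [mul_pow, div_pow, norm_sub_sq_real, norm_sub_sq_real, real_inner_smul_right, norm_smul,
    Real.norm_eq_abs, mul_pow, sq_abs]
  field_simp
  ring

theorem norm_sub_lt_div_mul_norm_sub_smul {a b : E} {l : ℝ} (hl : 0 < l) (ha : l < ‖a‖)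
    (hb : l < ‖b‖) : ‖a - b‖ < ‖b‖ / l * ‖a - (l ^ 2 / ‖b‖ ^ 2) • b‖ := by
  have hb0 : b ≠ 0 := norm_pos_iff.mp (hl.trans hb)
  have hsq := sq_div_mul_norm_sub_smul a b hl.ne' hb0
  have hpos : 0 < (‖a‖ ^ 2 - l ^ 2) * (‖b‖ ^ 2 - l ^ 2) / l ^ 2 := by
    have hA : 0 < ‖a‖ ^ 2 - l ^ 2 := by nlinarith
    have hB : 0 < ‖b‖ ^ 2 - l ^ 2 := by nlinarith
    positivity
  refine lt_of_pow_lt_pow_left₀ 2 (by positivity) ?_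
  linarith

end InnerProductSpace

theorem sub_inversion {n : ℕ} (x : EuclideanSpace ℝ (Fin n)) (l : ℝ)
    (ξ z : EuclideanSpace ℝ (Fin n)) :
    ξ - inversion x l z = (ξ - x) - (l ^ 2 / ‖z - x‖ ^ 2) • (z - x) := by
  rw [inversion]
  abel

theorem kernelK_eq {n : ℕ} (p : ℝ) (x : EuclideanSpace ℝ (Fin n)) {l : ℝ} (hl : 0 ≤ l)
    (ξ z : EuclideanSpace ℝ (Fin n)) :
    kernelK p x l ξ z = (‖z - x‖ / l * ‖ξ - inversion x l z‖) ^ p - ‖ξ - z‖ ^ p := by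
  rw [kernelK, Real.mul_rpow (by positivity) (norm_nonneg _)]

theorem stmt_7_general {n : ℕ} (p : ℝ) (hp : 0 < p)
    (x : EuclideanSpace ℝ (Fin n)) (lam : ℝ) (hlam : 0 < lam)
    (ξ z : EuclideanSpace ℝ (Fin n)) (hξ : lam < ‖ξ - x‖) (hz : lam < ‖z - x‖) :
    0 < kernelK p x lam ξ z := by
  have hlt : ‖ξ - z‖ < ‖z - x‖ / lam * ‖ξ - inversion x lam z‖ := by
    rw [sub_inversion, ← sub_sub_sub_cancel_right ξ z x]
    exact norm_sub_lt_div_mul_norm_sub_smul hlam hξ hz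
  rw [kernelK_eq p x hlam.le, sub_pos]
  exact Real.rpow_lt_rpow (norm_nonneg _) hlt hp

theorem stmt_7 {n : ℕ} (hn : 2 ≤ n) (p : ℝ) (hp : 0 < p)
    (x : EuclideanSpace ℝ (Fin n)) (lam : ℝ) (hlam : 0 < lam)
    (ξ z : EuclideanSpace ℝ (Fin n)) (hξ : lam < ‖ξ - x‖) (hz : lam < ‖z - x‖) :
    0 < kernelK p x lam ξ z :=
  stmt_7_general p hp x lam hlam ξ z hξ hz
end
end

section
/- Let n ≥ 2 be an integer and p > 0. Let f : [0,∞) × (0,∞) → (0,∞) be continuous and let u : ℝⁿ ∖ {0} → ℝ be a positive continuous solution of the integral equation (IE). Then ∫_{ℝⁿ} (1 + |z|^p) f(|z|, u(z)) dz < ∞. -/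
/-!
Evaluating the equation at two antipodal unit vectors `±e` shows that both integrands
`y ↦ ‖±e - y‖ ^ p * f ‖y‖ (u y)` are integrable, since otherwise the Bochner integral would
be `0 ≠ u (±e)`. By the triangle inequality, `‖e - y‖ + ‖e + y‖` is at least `2` and at
least `2 ‖y‖`, so `1 + ‖y‖ ^ p ≤ 2 (‖e - y‖ ^ p + ‖e + y‖ ^ p)`, and the weight `1 + ‖y‖ ^ p`
is dominated by the sum of the two integrable weights. Measurability of `y ↦ f ‖y‖ (u y)`
comes for free: it is the first integrand divided by its weight, which vanishes only at `e`.
-/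

open MeasureTheory

lemma one_add_rpow_le_two_mul_rpow_add_rpow {p a b t : ℝ} (hp : 0 < p) (ha : 0 ≤ a)
    (hb : 0 ≤ b) (ht : 0 ≤ t) (h2 : 2 ≤ a + b) (h2t : 2 * t ≤ a + b) :
    1 + t ^ p ≤ 2 * (a ^ p + b ^ p) := by
  have hmax_pow : max a b ^ p ≤ a ^ p + b ^ p := by
    rcases max_cases a b with ⟨h, _⟩ | ⟨h, _⟩ <;> rw [h]
    · linarith [Real.rpow_nonneg hb p]
    · linarith [Real.rpow_nonneg ha p]
  have hsum : a + b ≤ 2 * max a b := by linarith [le_max_left a b, le_max_right a b]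
  have hone : 1 ≤ max a b ^ p := Real.one_le_rpow (by linarith) hp.le
  have ht_pow : t ^ p ≤ max a b ^ p := Real.rpow_le_rpow ht (by linarith) hp.le
  linarith

section

variable {E : Type*} [NormedAddCommGroup E]

lemma aestronglyMeasurable_of_norm_sub_rpow_mul [MeasurableSpace E] [BorelSpace E]
    {μ : Measure E} [NullSingletonClass μ] {p : ℝ} {g : E → ℝ} (x : E)
    (hg : AEStronglyMeasurable (fun y => ‖x - y‖ ^ p * g y) μ) :
    AEStronglyMeasurable g μ := by
  have hweight : Measurable fun y : E => (‖x - y‖ ^ p)⁻¹ :=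
    ((continuous_const.sub continuous_id).norm.measurable.pow_const p).inv
  refine (hweight.aestronglyMeasurable.mul hg).congr ?_
  filter_upwards [μ.ae_ne x] with y hy
  have : ‖x - y‖ ^ p ≠ 0 :=
    (Real.rpow_pos_of_pos (norm_pos_iff.2 (sub_ne_zero.2 hy.symm)) p).ne'
  simp only [Pi.mul_apply]
  field_simp

variable [NormedSpace ℝ E]

lemma one_add_norm_rpow_le {p : ℝ} (hp : 0 < p) {e : E} (he : ‖e‖ = 1) (y : E) :
    1 + ‖y‖ ^ p ≤ 2 * (‖e - y‖ ^ p + ‖-e - y‖ ^ p) := by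
  refine one_add_rpow_le_two_mul_rpow_add_rpow hp (norm_nonneg _) (norm_nonneg _)
    (norm_nonneg _) ?_ ?_
  · calc (2 : ℝ) = ‖(e - y) - (-e - y)‖ := by
          rw [sub_sub_sub_cancel_right, sub_neg_eq_add, ← two_smul ℝ e, norm_smul, he]
          norm_num
      _ ≤ ‖e - y‖ + ‖-e - y‖ := norm_sub_le _ _
  · calc 2 * ‖y‖ = ‖(e - y) + (-e - y)‖ := by
          rw [show (e - y) + (-e - y) = -((2 : ℝ) • y) by rw [two_smul]; abel, norm_neg,
            norm_smul]
          norm_num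
      _ ≤ ‖e - y‖ + ‖-e - y‖ := norm_add_le _ _

variable [MeasurableSpace E] [BorelSpace E] {μ : Measure E} [NullSingletonClass μ]

lemma integrable_one_add_norm_rpow_mul {p : ℝ} (hp : 0 < p) {g : E → ℝ} {e : E} (he : ‖e‖ = 1)
    (h₁ : Integrable (fun y => ‖e - y‖ ^ p * g y) μ)
    (h₂ : Integrable (fun y => ‖-e - y‖ ^ p * g y) μ) :
    Integrable (fun y => (1 + ‖y‖ ^ p) * g y) μ := by
  have hg := aestronglyMeasurable_of_norm_sub_rpow_mul e h₁.aestronglyMeasurable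
  refine ((h₁.norm.add h₂.norm).const_mul 2).mono'
    ((measurable_const.add (measurable_norm.pow_const p)).aestronglyMeasurable.mul hg)
    (Filter.Eventually.of_forall fun y => ?_)
  have hweight : 0 ≤ 1 + ‖y‖ ^ p := by positivity
  calc ‖(1 + ‖y‖ ^ p) * g y‖ = (1 + ‖y‖ ^ p) * ‖g y‖ := by
        rw [norm_mul, Real.norm_of_nonneg hweight]
    _ ≤ 2 * (‖e - y‖ ^ p + ‖-e - y‖ ^ p) * ‖g y‖ :=
        mul_le_mul_of_nonneg_right (one_add_norm_rpow_le hp he y) (norm_nonneg _)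
    _ = 2 * (‖‖e - y‖ ^ p * g y‖ + ‖‖-e - y‖ ^ p * g y‖) := by
        simp only [norm_mul, Real.norm_of_nonneg (Real.rpow_nonneg (norm_nonneg _) p)]
        ring

end

theorem stmt_10_general {n : ℕ} (hn : 2 ≤ n) (p : ℝ) (hp : 0 < p)
    (f : ℝ → ℝ → ℝ)
    (u : EuclideanSpace ℝ (Fin n) → ℝ)
    (hu_pos : ∀ x : EuclideanSpace ℝ (Fin n), x ≠ 0 → 0 < u x)
    (hIE : ∀ x : EuclideanSpace ℝ (Fin n), x ≠ 0 →
      u x = ∫ y : EuclideanSpace ℝ (Fin n), ‖x - y‖ ^ p * f ‖y‖ (u y)) :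
    Integrable (fun z : EuclideanSpace ℝ (Fin n) => (1 + ‖z‖ ^ p) * f ‖z‖ (u z)) := by
  have : NeZero n := ⟨by omega⟩
  obtain ⟨e, he⟩ := exists_norm_eq (EuclideanSpace ℝ (Fin n)) zero_le_one
  have integrable_of_ne_zero (x : EuclideanSpace ℝ (Fin n)) (hx : x ≠ 0) :
      Integrable (fun y => ‖x - y‖ ^ p * f ‖y‖ (u y)) :=
    .of_integral_ne_zero (hIE x hx ▸ (hu_pos x hx).ne')
  have he₀ : e ≠ 0 := norm_ne_zero_iff.1 (he.symm ▸ one_ne_zero)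
  exact integrable_one_add_norm_rpow_mul hp he (integrable_of_ne_zero e he₀)
    (integrable_of_ne_zero (-e) (neg_ne_zero.2 he₀))

theorem stmt_10 {n : ℕ} (hn : 2 ≤ n) (p : ℝ) (hp : 0 < p)
    (f : ℝ → ℝ → ℝ)
    (hf_cont : ContinuousOn (fun q : ℝ × ℝ => f q.1 q.2) (Set.Ici 0 ×ˢ Set.Ioi 0))
    (hf_pos : ∀ α : ℝ, 0 ≤ α → ∀ β : ℝ, 0 < β → 0 < f α β)
    (u : EuclideanSpace ℝ (Fin n) → ℝ)
    (hu_pos : ∀ x : EuclideanSpace ℝ (Fin n), x ≠ 0 → 0 < u x)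
    (hu_cont : ContinuousOn u {(0 : EuclideanSpace ℝ (Fin n))}ᶜ)
    (hIE : ∀ x : EuclideanSpace ℝ (Fin n), x ≠ 0 →
      u x = ∫ y : EuclideanSpace ℝ (Fin n), ‖x - y‖ ^ p * f ‖y‖ (u y)) :
    Integrable (fun z : EuclideanSpace ℝ (Fin n) => (1 + ‖z‖ ^ p) * f ‖z‖ (u z)) :=
  stmt_10_general hn p hp f u hu_pos hIE
end

section
/- Let n ≥ 2 be an integer, p > 0, x ∈ ℝⁿ, λ̄ > 0 and δ̄ ∈ (0,1). There exists a constant C > 0 such that for every λ ∈ [λ̄, λ̄ + δ̄] and every y ∈ ℝⁿ with λ ≤ |y−x| ≤ λ̄ + δ̄, one has ∫_{{z : λ ≤ |z−x| ≤ λ̄ + δ̄}} K(x,λ;y,z) dz ≤ C (|y−x| − λ). -/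
/-!
Write `A = (‖z - x‖ / λ * ‖y - z^{x,λ}‖) ^ 2` and `B = ‖y - z‖ ^ 2`, so that
`K(x,λ;y,z) = A ^ (p/2) - B ^ (p/2)`. Expanding both squares around `x` gives the inversion
identity `A - B = (‖y - x‖² - λ²)(‖z - x‖² - λ²) / λ²`, which is nonnegative on the annulus and
`O(‖y - x‖ - λ)` uniformly there. By the mean value theorem the kernel is at most
`(p/2) ξ ^ (p/2 - 1) (A - B)` for some `ξ ∈ [B, A]`; the factor `ξ ^ (p/2 - 1)` is bounded when
`p ≥ 2` and at most `‖y - z‖ ^ (p - 2)` when `p < 2`. The latter is integrable over a ball of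
fixed radius around `y`, with an integral independent of `y`, because `p - 2 > -2 ≥ -n`.
-/

open MeasureTheory

noncomputable section

open Metric Module

theorem Real.rpow_sub_rpow_le {q A B M : ℝ} (hq : 0 < q) (hB : 0 < B) (hBA : B ≤ A)
    (hAM : A ≤ M) : A ^ q - B ^ q ≤ q * (M ^ (q - 1) + B ^ (q - 1)) * (A - B) := by
  rcases hBA.eq_or_lt with rfl | hBA
  · simp
  obtain ⟨ξ, hξ, hslope⟩ := exists_hasDerivAt_eq_slope (fun t => t ^ q)
    (fun t => q * t ^ (q - 1)) hBA
    (continuousOn_id.rpow_const fun t ht => Or.inl (hB.trans_le ht.1).ne')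
    fun t ht => Real.hasDerivAt_rpow_const (Or.inl (hB.trans ht.1).ne')
  have hξ_le : ξ ^ (q - 1) ≤ M ^ (q - 1) + B ^ (q - 1) := by
    have hMq := Real.rpow_nonneg (hB.le.trans (hBA.le.trans hAM)) (q - 1)
    have hBq := Real.rpow_nonneg hB.le (q - 1)
    rcases le_total 1 q with hq1 | hq1
    · linarith [Real.rpow_le_rpow (hB.trans hξ.1).le (hξ.2.le.trans hAM) (sub_nonneg.2 hq1)]
    · linarith [Real.rpow_le_rpow_of_nonpos hB hξ.1.le (sub_nonpos.2 hq1)]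
  rw [eq_div_iff (sub_pos.2 hBA).ne'] at hslope
  rw [← hslope]
  gcongr

theorem Real.sq_rpow_eq_rpow_two_mul {a : ℝ} (ha : 0 ≤ a) (q : ℝ) :
    (a ^ 2) ^ q = a ^ (2 * q) := by
  exact_mod_cast (Real.rpow_natCast_mul ha 2 q).symm

theorem preimage_sub_right_closedBall {E : Type*} [SeminormedAddCommGroup E] (y : E) (ρ : ℝ) :
    (· - y) ⁻¹' closedBall 0 ρ = closedBall y ρ := by
  ext z
  simp [dist_eq_norm]

theorem integrableOn_closedBall_norm_sub_rpow {E : Type*} [NormedAddCommGroup E]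
    [NormedSpace ℝ E] [FiniteDimensional ℝ E] [MeasurableSpace E] [BorelSpace E]
    (μ : Measure E) [μ.IsAddHaarMeasure] (hd : 1 ≤ finrank ℝ E) {α : ℝ}
    (hα : -(finrank ℝ E : ℝ) < α) (y : E) (ρ : ℝ) :
    IntegrableOn (fun z => ‖z - y‖ ^ α) (closedBall y ρ) μ := by
  have hloc : LocallyIntegrable (fun u : E => ‖u‖ ^ α) μ :=
    locallyIntegrable_of_norm_le_rpow (C := 1) (α := -α) hd (by linarith)
      (ae_of_all _ fun u => by
        rw [neg_neg, one_mul, Real.norm_of_nonneg (Real.rpow_nonneg (norm_nonneg u) α)])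
      (measurable_norm.pow_const α).aestronglyMeasurable
  rw [← preimage_sub_right_closedBall y ρ]
  exact ((measurePreserving_sub_right μ y).integrableOn_comp_preimage
    (measurableEmbedding_subRight y)).2 (hloc.integrableOn_isCompact (isCompact_closedBall 0 ρ))

theorem setIntegral_closedBall_norm_sub_rpow {E : Type*} [NormedAddCommGroup E]
    [MeasurableSpace E] [BorelSpace E] (μ : Measure E) [μ.IsAddRightInvariant]
    (y : E) (ρ α : ℝ) :
    ∫ z in closedBall y ρ, ‖z - y‖ ^ α ∂μ = ∫ u in closedBall 0 ρ, ‖u‖ ^ α ∂μ := by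
  rw [← preimage_sub_right_closedBall y ρ]
  exact (measurePreserving_sub_right μ y).setIntegral_preimage_emb
    (measurableEmbedding_subRight y) (fun u => ‖u‖ ^ α) (closedBall 0 ρ)

section Kernel

variable {n : ℕ} {p l : ℝ} {x y z : EuclideanSpace ℝ (Fin n)}

theorem sq_mul_norm_sub_inversion_sub_sq (hl : l ≠ 0) (hz : z ≠ x) :
    (‖z - x‖ / l * ‖y - inversion x l z‖) ^ 2 - ‖y - z‖ ^ 2 =
      (‖y - x‖ ^ 2 - l ^ 2) * (‖z - x‖ ^ 2 - l ^ 2) / l ^ 2 := by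
  have hzx : ‖z - x‖ ≠ 0 := norm_ne_zero_iff.2 (sub_ne_zero.2 hz)
  have hinv : ‖y - inversion x l z‖ ^ 2 = ‖y - x‖ ^ 2
      - 2 * (l ^ 2 / ‖z - x‖ ^ 2 * inner ℝ (y - x) (z - x))
      + (l ^ 2 / ‖z - x‖ ^ 2) ^ 2 * ‖z - x‖ ^ 2 := by
    rw [inversion, sub_add_eq_sub_sub, norm_sub_sq_real, real_inner_smul_right, norm_smul,
      Real.norm_eq_abs, mul_pow, sq_abs]
  have hyz : ‖y - z‖ ^ 2 = ‖y - x‖ ^ 2 - 2 * inner ℝ (y - x) (z - x) + ‖z - x‖ ^ 2 := by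
    rw [← sub_sub_sub_cancel_right y z x, norm_sub_sq_real]
  rw [mul_pow, hinv, hyz]
  field_simp
  ring

theorem sq_norm_sub_le_sq_mul_norm_sub_inversion (hl : 0 < l) (hy : l ≤ ‖y - x‖)
    (hz : l ≤ ‖z - x‖) : ‖y - z‖ ^ 2 ≤ (‖z - x‖ / l * ‖y - inversion x l z‖) ^ 2 := by
  have hdiff := sq_mul_norm_sub_inversion_sub_sq (y := y) hl.ne'
    (norm_sub_pos_iff.1 (hl.trans_le hz))
  have : 0 ≤ (‖y - x‖ ^ 2 - l ^ 2) * (‖z - x‖ ^ 2 - l ^ 2) / l ^ 2 := by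
    apply div_nonneg (mul_nonneg _ _) (sq_nonneg l) <;> nlinarith
  linarith

theorem sq_mul_norm_sub_inversion_sub_sq_le {lb R : ℝ} (hlb : 0 < lb) (hl : lb ≤ l)
    (hy : l ≤ ‖y - x‖) (hyR : ‖y - x‖ ≤ R) (hz : l ≤ ‖z - x‖) (hzR : ‖z - x‖ ≤ R) :
    (‖z - x‖ / l * ‖y - inversion x l z‖) ^ 2 - ‖y - z‖ ^ 2 ≤
      2 * R ^ 3 / lb ^ 2 * (‖y - x‖ - l) := by
  have hl0 : 0 < l := hlb.trans_le hl
  rw [sq_mul_norm_sub_inversion_sub_sq hl0.ne' (norm_sub_pos_iff.1 (hl0.trans_le hz))]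
  have hyl : 0 ≤ ‖y - x‖ - l := sub_nonneg.2 hy
  have hR : 0 < R := hl0.trans_le (hy.trans hyR)
  calc (‖y - x‖ ^ 2 - l ^ 2) * (‖z - x‖ ^ 2 - l ^ 2) / l ^ 2
      ≤ 2 * R * (‖y - x‖ - l) * R ^ 2 / lb ^ 2 := by
        apply div_le_div₀ (by positivity) (mul_le_mul (by nlinarith) (by nlinarith) (by nlinarith)
          (by positivity)) (by positivity) (by nlinarith)
    _ = 2 * R ^ 3 / lb ^ 2 * (‖y - x‖ - l) := by ring

theorem kernelK_eq_rpow_sub_rpow (hl : 0 ≤ l) : kernelK p x l y z =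
    ((‖z - x‖ / l * ‖y - inversion x l z‖) ^ 2) ^ (p / 2) - (‖y - z‖ ^ 2) ^ (p / 2) := by
  rw [Real.sq_rpow_eq_rpow_two_mul (by positivity), Real.sq_rpow_eq_rpow_two_mul (norm_nonneg _),
    mul_div_cancel₀ p two_ne_zero, Real.mul_rpow (by positivity) (norm_nonneg _), kernelK]

theorem kernelK_nonneg (hp : 0 ≤ p) (hl : 0 < l) (hy : l ≤ ‖y - x‖) (hz : l ≤ ‖z - x‖) :
    0 ≤ kernelK p x l y z := by
  rw [kernelK_eq_rpow_sub_rpow hl.le, sub_nonneg]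
  exact Real.rpow_le_rpow (sq_nonneg _) (sq_norm_sub_le_sq_mul_norm_sub_inversion hl hy hz)
    (by positivity)

theorem kernelK_le {lb R : ℝ} (hp : 0 < p) (hlb : 0 < lb) (hl : lb ≤ l)
    (hy : l ≤ ‖y - x‖) (hyR : ‖y - x‖ ≤ R) (hz : l ≤ ‖z - x‖) (hzR : ‖z - x‖ ≤ R) (hzy : z ≠ y) :
    kernelK p x l y z ≤
      p / 2 * ((4 * R ^ 2 + 2 * R ^ 4 / lb ^ 2) ^ (p / 2 - 1) + ‖z - y‖ ^ (p - 2))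
        * (2 * R ^ 3 / lb ^ 2) * (‖y - x‖ - l) := by
  have hl0 : 0 < l := hlb.trans_le hl
  set A := (‖z - x‖ / l * ‖y - inversion x l z‖) ^ 2
  set B := ‖y - z‖ ^ 2
  have hBA : B ≤ A := sq_norm_sub_le_sq_mul_norm_sub_inversion hl0 hy hz
  have hAB : A - B ≤ 2 * R ^ 3 / lb ^ 2 * (‖y - x‖ - l) :=
    sq_mul_norm_sub_inversion_sub_sq_le hlb hl hy hyR hz hzR
  have hB_le : B ≤ 4 * R ^ 2 := by
    have := norm_sub_le_norm_sub_add_norm_sub y x z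
    rw [norm_sub_rev x z] at this
    nlinarith [norm_nonneg (y - z)]
  have hA_le : A ≤ 4 * R ^ 2 + 2 * R ^ 4 / lb ^ 2 := by
    have : 2 * R ^ 3 / lb ^ 2 * (‖y - x‖ - l) ≤ 2 * R ^ 4 / lb ^ 2 := by
      rw [show 2 * R ^ 4 / lb ^ 2 = 2 * R ^ 3 / lb ^ 2 * R by ring]
      have hR : 0 < R := hl0.trans_le (hy.trans hyR)
      gcongr
      linarith
    linarith
  have hB_rpow : B ^ (p / 2 - 1) = ‖z - y‖ ^ (p - 2) := by
    rw [Real.sq_rpow_eq_rpow_two_mul (norm_nonneg _), norm_sub_rev]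
    ring_nf
  rw [kernelK_eq_rpow_sub_rpow hl0.le, ← hB_rpow]
  calc A ^ (p / 2) - B ^ (p / 2) ≤ p / 2 * ((4 * R ^ 2 + 2 * R ^ 4 / lb ^ 2) ^ (p / 2 - 1)
        + B ^ (p / 2 - 1)) * (A - B) :=
        Real.rpow_sub_rpow_le (by positivity) (pow_pos (norm_sub_pos_iff.2 hzy.symm) 2) hBA hA_le
    _ ≤ _ := by rw [mul_assoc _ (2 * R ^ 3 / lb ^ 2)]; gcongr

theorem setIntegral_kernelK_le {lb R : ℝ} (hn : 0 < n) (hpn : -(n : ℝ) < p - 2) (hp : 0 < p)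
    (hlb : 0 < lb) (hl : lb ≤ l) (hy : l ≤ ‖y - x‖) (hyR : ‖y - x‖ ≤ R) :
    ∫ z in {z | l ≤ ‖z - x‖ ∧ ‖z - x‖ ≤ R}, kernelK p x l y z ≤
      p / 2 * ((4 * R ^ 2 + 2 * R ^ 4 / lb ^ 2) ^ (p / 2 - 1) * volume.real (closedBall x R)
        + ∫ u in closedBall (0 : EuclideanSpace ℝ (Fin n)) (2 * R), ‖u‖ ^ (p - 2))
      * (2 * R ^ 3 / lb ^ 2) * (‖y - x‖ - l) := by
  set S := {z : EuclideanSpace ℝ (Fin n) | l ≤ ‖z - x‖ ∧ ‖z - x‖ ≤ R}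
  set M := 4 * R ^ 2 + 2 * R ^ 4 / lb ^ 2
  have hl0 : 0 < l := hlb.trans_le hl
  have hS : MeasurableSet S := by measurability
  have hS_x : S ⊆ closedBall x R := fun z hz => mem_closedBall_iff_norm.2 hz.2
  have hS_y : S ⊆ closedBall y (2 * R) := fun z hz => by
    rw [mem_closedBall_iff_norm, two_mul]
    calc ‖z - y‖ ≤ ‖z - x‖ + ‖x - y‖ := norm_sub_le_norm_sub_add_norm_sub z x y
      _ ≤ R + R := add_le_add hz.2 (norm_sub_rev y x ▸ hyR)
  have hS_fin : volume S ≠ ⊤ := ((measure_mono hS_x).trans_lt measure_closedBall_lt_top).ne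
  have hg : IntegrableOn (fun z => ‖z - y‖ ^ (p - 2)) (closedBall y (2 * R)) :=
    integrableOn_closedBall_norm_sub_rpow volume (by simpa using hn.nat_succ_le)
      (by simpa using hpn) y _
  have : Nontrivial (EuclideanSpace ℝ (Fin n)) :=
    Module.nontrivial_of_finrank_pos (R := ℝ) (by simpa using hn)
  calc ∫ z in S, kernelK p x l y z
      ≤ ∫ z in S, p / 2 * (M ^ (p / 2 - 1) + ‖z - y‖ ^ (p - 2)) * (2 * R ^ 3 / lb ^ 2)
          * (‖y - x‖ - l) := by
        refine integral_mono_of_nonneg ?_ ?_ ?_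
        · filter_upwards [ae_restrict_mem hS] with z hz
          exact kernelK_nonneg hp.le hl0 hy hz.1
        · exact ((((integrableOn_const hS_fin).add
            (hg.mono_set hS_y)).const_mul _).mul_const _).mul_const _
        · filter_upwards [ae_restrict_mem hS, ae_restrict_of_ae (Measure.ae_ne volume y)]
            with z hz hzy
          exact kernelK_le hp hlb hl hy hyR hz.1 hz.2 hzy
    _ = p / 2 * (M ^ (p / 2 - 1) * volume.real S + ∫ z in S, ‖z - y‖ ^ (p - 2))
          * (2 * R ^ 3 / lb ^ 2) * (‖y - x‖ - l) := by
        rw [integral_mul_const, integral_mul_const, integral_const_mul, integral_add,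
          setIntegral_const, smul_eq_mul, mul_comm (volume.real S)]
        · exact integrableOn_const hS_fin
        · exact hg.mono_set hS_y
    _ ≤ _ := by
        rw [← setIntegral_closedBall_norm_sub_rpow volume y]
        have hR : 0 < R := hl0.trans_le (hy.trans hyR)
        gcongr
        · exact measure_closedBall_lt_top.ne
        · exact ae_of_all _ fun z => Real.rpow_nonneg (norm_nonneg _) _

end Kernel

theorem stmt_13 {n : ℕ} (hn : 2 ≤ n) (p : ℝ) (hp : 0 < p)
    (x : EuclideanSpace ℝ (Fin n)) (lamBar delBar : ℝ)
    (hlamBar : 0 < lamBar) (hdelBar : delBar ∈ Set.Ioo (0 : ℝ) 1) :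
    ∃ C : ℝ, 0 < C ∧
      ∀ lam ∈ Set.Icc lamBar (lamBar + delBar),
        ∀ y : EuclideanSpace ℝ (Fin n),
          lam ≤ ‖y - x‖ → ‖y - x‖ ≤ lamBar + delBar →
          (∫ z in {z : EuclideanSpace ℝ (Fin n) |
              lam ≤ ‖z - x‖ ∧ ‖z - x‖ ≤ lamBar + delBar},
            kernelK p x lam y z) ≤ C * (‖y - x‖ - lam) := by
  set R := lamBar + delBar
  have hR : 0 < R := add_pos hlamBar hdelBar.1
  set C := p / 2 * ((4 * R ^ 2 + 2 * R ^ 4 / lamBar ^ 2) ^ (p / 2 - 1)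
      * volume.real (closedBall x R)
      + ∫ u in closedBall (0 : EuclideanSpace ℝ (Fin n)) (2 * R), ‖u‖ ^ (p - 2))
    * (2 * R ^ 3 / lamBar ^ 2)
  have hC : 0 ≤ C := by positivity
  have hn' : (2 : ℝ) ≤ n := by exact_mod_cast hn
  refine ⟨C + 1, by positivity, fun l hl y hy hyR => ?_⟩
  calc _ ≤ C * (‖y - x‖ - l) :=
        setIntegral_kernelK_le (by omega) (by linarith) hp hlamBar hl.1 hy hyR
    _ ≤ (C + 1) * (‖y - x‖ - l) := by nlinarith
end
end

section
/- Let n ≥ 2 be an integer and p > 0. Let u : ℝⁿ ∖ {0} → ℝ be positive and continuous, and suppose that for every x ∈ ℝⁿ ∖ {0}, every λ with 0 < λ < |x|, and every y ∈ ℝⁿ ∖ {0} with |y−x| ≥ λ, one has u(y) ≤ (|y−x|/λ)^p u(x + λ²(y−x)/|y−x|²). Then u is radially symmetric about the origin (u(y) = u(z) whenever y, z ∈ ℝⁿ ∖ {0} and |y| = |z|) and monotone nondecreasing with respect to the origin (for every unit vector e, the map t ↦ u(te) is nondecreasing on (0,∞)). -/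
/-!
For `0 < ‖b‖ ≤ ‖c‖` with `b ≠ c` and any `s > 0`, the inversion in the sphere of centre
`x = c + s • (c - b)` and radius `λ = √(s (1 + s)) ‖b - c‖` maps `b` to `c`, and the sphere does not
enclose the origin because `‖x‖² = (1 + s) ‖c‖² - s ‖b‖² + λ² > λ²`. The hypothesis then gives
`u b ≤ (1 + s⁻¹) ^ (p / 2) * u c`, and letting `s → ∞` yields `u b ≤ u c` whenever
`0 < ‖b‖ ≤ ‖c‖`. Radial symmetry and monotonicity are both special cases of this.
-/

open Filter Topology

lemma le_of_forall_le_sqrt_one_add_inv_rpow_mul {p a c : ℝ}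
    (h : ∀ s : ℝ, 0 < s → a ≤ √(1 + s⁻¹) ^ p * c) : a ≤ c := by
  have hlim : Tendsto (fun s : ℝ => √(1 + s⁻¹) ^ p * c) atTop (𝓝 c) := by
    have hinv : Tendsto (fun s : ℝ => 1 + s⁻¹) atTop (𝓝 1) := by
      simpa using tendsto_inv_atTop_zero.const_add (1 : ℝ)
    have hsqrt : Tendsto (fun s : ℝ => √(1 + s⁻¹)) atTop (𝓝 1) := by
      simpa using hinv.sqrt
    simpa using (hsqrt.rpow_const (Or.inl one_ne_zero)).mul_const c
  exact ge_of_tendsto hlim ((eventually_gt_atTop 0).mono h)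

lemma one_add_div_sqrt_mul_one_add {s : ℝ} (hs : 0 < s) :
    (1 + s) / √(s * (1 + s)) = √(1 + s⁻¹) := by
  rw [show 1 + s⁻¹ = (1 + s) ^ 2 / (s * (1 + s)) by field_simp; ring,
    Real.sqrt_div (by positivity), Real.sqrt_sq (by positivity)]

section InnerProductSpace

variable {E : Type*} [NormedAddCommGroup E] [InnerProductSpace ℝ E]

lemma norm_add_smul_sub_sq (b c : E) (s : ℝ) :
    ‖c + s • (c - b)‖ ^ 2 = (1 + s) * ‖c‖ ^ 2 - s * ‖b‖ ^ 2 + s * (1 + s) * ‖c - b‖ ^ 2 := by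
  rw [norm_add_sq_real, norm_smul, mul_pow, Real.norm_eq_abs, sq_abs, inner_smul_right,
    inner_sub_right, real_inner_self_eq_norm_sq, norm_sub_sq_real]
  ring

def MovingSphereIneq (p : ℝ) (u : E → ℝ) : Prop :=
  ∀ x : E, x ≠ 0 → ∀ lam : ℝ, 0 < lam → lam < ‖x‖ → ∀ y : E, y ≠ 0 → lam ≤ ‖y - x‖ →
    u y ≤ (‖y - x‖ / lam) ^ p * u (x + (lam ^ 2 / ‖y - x‖ ^ 2) • (y - x))

namespace MovingSphereIneq

variable {p : ℝ} {u : E → ℝ} {b c : E}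

lemma le_sqrt_one_add_inv_rpow_mul (hu : MovingSphereIneq p u) (hb : b ≠ 0) (hbc : b ≠ c)
    (hnorm : ‖b‖ ≤ ‖c‖) {s : ℝ} (hs : 0 < s) : u b ≤ √(1 + s⁻¹) ^ p * u c := by
  set x := c + s • (c - b) with hx_def
  set lam := √(s * (1 + s)) * ‖b - c‖ with hlam_def
  have hd : 0 < ‖b - c‖ := norm_pos_iff.2 (sub_ne_zero.2 hbc)
  have hlam : 0 < lam := mul_pos (Real.sqrt_pos.2 (by positivity)) hd
  have hlam_sq : lam ^ 2 = s * (1 + s) * ‖b - c‖ ^ 2 := by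
    rw [hlam_def, mul_pow, Real.sq_sqrt (by positivity)]
  have hbx : b - x = (1 + s) • (b - c) := by rw [hx_def]; module
  have hnorm_bx : ‖b - x‖ = (1 + s) * ‖b - c‖ := by
    rw [hbx, norm_smul, Real.norm_of_nonneg (by positivity)]
  have hlam_lt : lam < ‖x‖ := by
    have hb_pos : 0 < ‖b‖ := norm_pos_iff.2 hb
    have hsq : ‖b‖ ^ 2 ≤ ‖c‖ ^ 2 := pow_le_pow_left₀ hb_pos.le hnorm 2
    refine lt_of_pow_lt_pow_left₀ 2 (norm_nonneg x) ?_
    rw [hlam_sq, hx_def, norm_add_smul_sub_sq, norm_sub_rev c b]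
    nlinarith
  have hlam_le : lam ≤ ‖b - x‖ := by
    rw [hnorm_bx, hlam_def]
    refine mul_le_mul_of_nonneg_right ?_ hd.le
    calc √(s * (1 + s)) ≤ √((1 + s) ^ 2) := Real.sqrt_le_sqrt (by nlinarith)
      _ = 1 + s := Real.sqrt_sq (by positivity)
  have himage : x + (lam ^ 2 / ‖b - x‖ ^ 2) • (b - x) = c := by
    rw [hnorm_bx, hlam_sq, hbx, smul_smul,
      show s * (1 + s) * ‖b - c‖ ^ 2 / ((1 + s) * ‖b - c‖) ^ 2 * (1 + s) = s by field_simp, hx_def]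
    module
  have hratio : ‖b - x‖ / lam = √(1 + s⁻¹) := by
    rw [hnorm_bx, hlam_def, mul_div_mul_right _ _ hd.ne', one_add_div_sqrt_mul_one_add hs]
  have hx : x ≠ 0 := norm_pos_iff.1 (hlam.trans hlam_lt)
  simpa only [himage, hratio] using hu x hx lam hlam hlam_lt b hb hlam_le

lemma le_of_norm_le (hu : MovingSphereIneq p u) (hb : b ≠ 0) (hnorm : ‖b‖ ≤ ‖c‖) :
    u b ≤ u c := by
  rcases eq_or_ne b c with rfl | hbc
  · exact le_rfl
  exact le_of_forall_le_sqrt_one_add_inv_rpow_mul fun s hs =>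
    hu.le_sqrt_one_add_inv_rpow_mul hb hbc hnorm hs

end MovingSphereIneq

end InnerProductSpace

theorem stmt_14_general {n : ℕ} (p : ℝ)
    (u : EuclideanSpace ℝ (Fin n) → ℝ)
    (hMS : ∀ x : EuclideanSpace ℝ (Fin n), x ≠ 0 → ∀ lam : ℝ, 0 < lam → lam < ‖x‖ →
      ∀ y : EuclideanSpace ℝ (Fin n), y ≠ 0 → lam ≤ ‖y - x‖ →
        u y ≤ (‖y - x‖ / lam) ^ p * u (x + (lam ^ 2 / ‖y - x‖ ^ 2) • (y - x))) :
    (∀ y z : EuclideanSpace ℝ (Fin n), y ≠ 0 → z ≠ 0 → ‖y‖ = ‖z‖ → u y = u z) ∧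
    (∀ e : EuclideanSpace ℝ (Fin n), ‖e‖ = 1 →
      ∀ s t : ℝ, 0 < s → s ≤ t → u (s • e) ≤ u (t • e)) := by
  have hu : MovingSphereIneq p u := hMS
  refine ⟨fun y z hy hz hyz => le_antisymm (hu.le_of_norm_le hy hyz.le)
    (hu.le_of_norm_le hz hyz.ge), fun e he s t hs hst => ?_⟩
  have he0 : e ≠ 0 := norm_ne_zero_iff.1 (by rw [he]; exact one_ne_zero)
  refine hu.le_of_norm_le (smul_ne_zero hs.ne' he0) ?_
  rwa [norm_smul, norm_smul, he, Real.norm_of_nonneg hs.le,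
    Real.norm_of_nonneg (hs.le.trans hst), mul_one, mul_one]

theorem stmt_14 {n : ℕ} (hn : 2 ≤ n) (p : ℝ) (hp : 0 < p)
    (u : EuclideanSpace ℝ (Fin n) → ℝ)
    (hu_pos : ∀ x : EuclideanSpace ℝ (Fin n), x ≠ 0 → 0 < u x)
    (hu_cont : ContinuousOn u {(0 : EuclideanSpace ℝ (Fin n))}ᶜ)
    (hMS : ∀ x : EuclideanSpace ℝ (Fin n), x ≠ 0 → ∀ lam : ℝ, 0 < lam → lam < ‖x‖ →
      ∀ y : EuclideanSpace ℝ (Fin n), y ≠ 0 → lam ≤ ‖y - x‖ →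
        u y ≤ (‖y - x‖ / lam) ^ p * u (x + (lam ^ 2 / ‖y - x‖ ^ 2) • (y - x))) :
    (∀ y z : EuclideanSpace ℝ (Fin n), y ≠ 0 → z ≠ 0 → ‖y‖ = ‖z‖ → u y = u z) ∧
    (∀ e : EuclideanSpace ℝ (Fin n), ‖e‖ = 1 →
      ∀ s t : ℝ, 0 < s → s ≤ t → u (s • e) ≤ u (t • e)) :=
  stmt_14_general p u hMS
end

section
/- Let n ≥ 2 be an integer, p > 0, λ̄ > 0 and δ̄ ∈ (0,1). There exists a constant C > 0 such that for every λ ∈ [λ̄, λ̄ + δ̄], every ξ ∈ ℝⁿ with λ ≤ |ξ| ≤ λ̄ + δ̄, and every z ∈ ℝⁿ with λ̄ + 2 ≤ |z| ≤ λ̄ + 3, one has K(0,λ;ξ,z) ≥ C (|ξ| − λ). -/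
noncomputable section

/-!
Put `A = (|z|/λ) |ξ - z^{0,λ}|` and `B = |ξ - z|`, so that `K(0,λ;ξ,z) = A^p - B^p`. Expanding
both norms gives the moving-sphere identity `A² - B² = (|ξ|² - λ²)(|z|² - λ²)/λ²`, which is at
least `4(|ξ| - λ)` in the given ranges. There also `1 ≤ B² ≤ A² ≤ M` for a constant `M`, so the
mean value theorem for `s ↦ s^{p/2}` on `[1, M]` bounds `A^p - B^p` below by a fixed multiple
of `A² - B²`.
-/

theorem mul_sub_le_rpow_sub_rpow {q M a b : ℝ} (hq : 0 ≤ q) (hb : 1 ≤ b) (hba : b ≤ a)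
    (haM : a ≤ M) : q * min 1 (M ^ (q - 1)) * (a - b) ≤ a ^ q - b ^ q := by
  have hderiv : ∀ x ∈ Set.Icc 1 M, HasDerivAt (fun t : ℝ => t ^ q) (q * x ^ (q - 1)) x :=
    fun x hx => Real.hasDerivAt_rpow_const (Or.inl (by linarith [hx.1]))
  refine (convex_Icc 1 M).mul_sub_le_image_sub_of_le_deriv
    (fun x hx => (hderiv x hx).continuousAt.continuousWithinAt)
    (fun x hx => (hderiv x (interior_subset hx)).differentiableAt.differentiableWithinAt)
    (fun x hx => ?_) b ⟨hb, hba.trans haM⟩ a ⟨hb.trans hba, haM⟩ hba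
  rw [interior_Icc] at hx
  rw [(hderiv x (Set.Ioo_subset_Icc_self hx)).deriv]
  gcongr
  rcases le_total 1 q with hq1 | hq1
  · exact (min_le_left _ _).trans (Real.one_le_rpow hx.1.le (by linarith))
  · exact (min_le_right _ _).trans (Real.rpow_le_rpow_of_nonpos (by linarith [hx.1]) hx.2.le
      (by linarith))

theorem mul_sq_sub_sq_le_rpow_sub_rpow {p M a b : ℝ} (hp : 0 ≤ p) (hb0 : 0 ≤ b) (hb : 1 ≤ b ^ 2)
    (hba : b ≤ a) (haM : a ^ 2 ≤ M) :
    p / 2 * min 1 (M ^ (p / 2 - 1)) * (a ^ 2 - b ^ 2) ≤ a ^ p - b ^ p := by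
  have hsq : ∀ x : ℝ, 0 ≤ x → x ^ p = (x ^ 2) ^ (p / 2) := fun x hx => by
    rw [← Real.rpow_natCast_mul hx]; push_cast; ring_nf
  rw [hsq a (hb0.trans hba), hsq b hb0]
  exact mul_sub_le_rpow_sub_rpow (by positivity) hb (by gcongr) haM

theorem four_mul_sub_le_sq_sub_sq_mul_sq_sub_sq_div {a l w : ℝ} (hl : 0 < l) (hla : l ≤ a)
    (hlw : l + 1 ≤ w) : 4 * (a - l) ≤ (a ^ 2 - l ^ 2) * (w ^ 2 - l ^ 2) / l ^ 2 := by
  rw [le_div_iff₀ (by positivity)]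
  have hw : 2 * l + 1 ≤ w ^ 2 - l ^ 2 := by nlinarith
  have ha : 2 * l * (a - l) ≤ a ^ 2 - l ^ 2 := by nlinarith
  nlinarith [mul_le_mul ha hw (by positivity) (by nlinarith)]

theorem sq_sub_sq_mul_sq_sub_sq_le {a l w : ℝ} (hlw : l ^ 2 ≤ w ^ 2) :
    (a ^ 2 - l ^ 2) * (w ^ 2 - l ^ 2) ≤ (a * w) ^ 2 := by
  nlinarith [mul_nonneg (sq_nonneg l) (add_nonneg (sq_nonneg a) (sub_nonneg.2 hlw))]

section Inversion

variable {n : ℕ} {ξ z : EuclideanSpace ℝ (Fin n)} {l : ℝ}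

theorem inversion_zero (l : ℝ) (z : EuclideanSpace ℝ (Fin n)) :
    inversion 0 l z = (l ^ 2 / ‖z‖ ^ 2) • z := by
  simp [inversion]

theorem sq_norm_div_mul_norm_sub_inversion_zero (hl : l ≠ 0) (hz : z ≠ 0) :
    (‖z‖ / l * ‖ξ - inversion 0 l z‖) ^ 2
      = ‖ξ - z‖ ^ 2 + (‖ξ‖ ^ 2 - l ^ 2) * (‖z‖ ^ 2 - l ^ 2) / l ^ 2 := by
  have hz' : ‖z‖ ≠ 0 := norm_ne_zero_iff.mpr hz
  rw [mul_pow, inversion_zero, norm_sub_sq_real, norm_sub_sq_real, real_inner_smul_right,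
    norm_smul, Real.norm_of_nonneg (by positivity)]
  field_simp
  ring

theorem sq_norm_div_mul_norm_sub_inversion_zero_le (hl : 0 < l) (hlz : l ≤ ‖z‖) :
    (‖z‖ / l * ‖ξ - inversion 0 l z‖) ^ 2 ≤ (‖ξ‖ + ‖z‖) ^ 2 + (‖ξ‖ * ‖z‖) ^ 2 / l ^ 2 := by
  rw [sq_norm_div_mul_norm_sub_inversion_zero hl.ne' (norm_pos_iff.mp (hl.trans_le hlz))]
  gcongr
  · exact norm_sub_le ξ z
  · exact sq_sub_sq_mul_sq_sub_sq_le (by gcongr)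

theorem kernelK_zero (p : ℝ) (hl : 0 ≤ l) :
    kernelK p 0 l ξ z = (‖z‖ / l * ‖ξ - inversion 0 l z‖) ^ p - ‖ξ - z‖ ^ p := by
  rw [kernelK, sub_zero, Real.mul_rpow (by positivity) (norm_nonneg _)]

end Inversion

theorem stmt_16_general {n : ℕ} (p : ℝ) (hp : 0 < p)
    (lamBar delBar : ℝ) (hlamBar : 0 < lamBar) (hdelBar : delBar ∈ Set.Ioo (0 : ℝ) 1) :
    ∃ C : ℝ, 0 < C ∧
      ∀ lam ∈ Set.Icc lamBar (lamBar + delBar),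
        ∀ ξ : EuclideanSpace ℝ (Fin n), lam ≤ ‖ξ‖ → ‖ξ‖ ≤ lamBar + delBar →
          ∀ z : EuclideanSpace ℝ (Fin n), lamBar + 2 ≤ ‖z‖ → ‖z‖ ≤ lamBar + 3 →
            C * (‖ξ‖ - lam) ≤ kernelK p (0 : EuclideanSpace ℝ (Fin n)) lam ξ z := by
  obtain ⟨-, hdel⟩ := hdelBar
  set M := (lamBar + 1 + (lamBar + 3)) ^ 2 + ((lamBar + 1) * (lamBar + 3)) ^ 2 / lamBar ^ 2
    with hM
  refine ⟨p / 2 * min 1 (M ^ (p / 2 - 1)) * 4, by positivity, ?_⟩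
  rintro l ⟨hl, hl'⟩ ξ hξ hξ' z hz hz'
  have hl0 : 0 < l := hlamBar.trans_le hl
  set A := ‖z‖ / l * ‖ξ - inversion 0 l z‖
  set B := ‖ξ - z‖
  set D := (‖ξ‖ ^ 2 - l ^ 2) * (‖z‖ ^ 2 - l ^ 2) / l ^ 2
  have hAB : A ^ 2 = B ^ 2 + D :=
    sq_norm_div_mul_norm_sub_inversion_zero hl0.ne' (norm_pos_iff.mp (by linarith))
  have hD : 4 * (‖ξ‖ - l) ≤ D := four_mul_sub_le_sq_sub_sq_mul_sq_sub_sq_div hl0 hξ (by linarith)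
  have hB : 1 ≤ B := by linarith [norm_sub_norm_le z ξ, norm_sub_rev z ξ]
  have hBA : B ≤ A := by
    refine (pow_le_pow_iff_left₀ (norm_nonneg _) (by positivity) two_ne_zero).mp ?_
    linarith
  have hAM : A ^ 2 ≤ M := by
    refine (sq_norm_div_mul_norm_sub_inversion_zero_le hl0 (by linarith)).trans ?_
    rw [hM]
    gcongr <;> linarith
  rw [kernelK_zero p hl0.le, mul_assoc]
  calc _ ≤ p / 2 * min 1 (M ^ (p / 2 - 1)) * D := by gcongr
    _ = p / 2 * min 1 (M ^ (p / 2 - 1)) * (A ^ 2 - B ^ 2) := by rw [hAB]; ring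
    _ ≤ A ^ p - B ^ p :=
      mul_sq_sub_sq_le_rpow_sub_rpow hp.le (norm_nonneg _) (one_le_pow₀ hB) hBA hAM

theorem stmt_16 {n : ℕ} (hn : 2 ≤ n) (p : ℝ) (hp : 0 < p)
    (lamBar delBar : ℝ) (hlamBar : 0 < lamBar) (hdelBar : delBar ∈ Set.Ioo (0 : ℝ) 1) :
    ∃ C : ℝ, 0 < C ∧
      ∀ lam ∈ Set.Icc lamBar (lamBar + delBar),
        ∀ ξ : EuclideanSpace ℝ (Fin n), lam ≤ ‖ξ‖ → ‖ξ‖ ≤ lamBar + delBar →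
          ∀ z : EuclideanSpace ℝ (Fin n), lamBar + 2 ≤ ‖z‖ → ‖z‖ ≤ lamBar + 3 →
            C * (‖ξ‖ - lam) ≤ kernelK p (0 : EuclideanSpace ℝ (Fin n)) lam ξ z :=
  stmt_16_general p hp lamBar delBar hlamBar hdelBar
end
end
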